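/- arXiv:1212.6850 — 4 statements merged into one kernel-verified Lean document; each statement's English description precedes it below -/
import Mathlib

section
/- For every integer r with 1 \le r \le a, the formal power series z(x) defined by z(x) = x \exp(z(x)^a) satisfies z(x)^r / r = \sum_{b=0}^\infty ((ab+r)^{b-1}/b!) x^{ab+r}. -/
/-!
Since `z ^ s = X ^ s * exp (s * z ^ a)`, comparing coefficients gives the recursion
`[x^n] z^s = ∑ₘ sᵐ/m! · [x^(n-s)] z^(a m)`, which involves only smaller indices. Strong
induction then shows that the coefficients vanish off `s + aℕ`, and at `n = a b + s` the
recursion reduces to the Abel-type identity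
`∑ₘ sᵐ/m! · a m (a b)^(b-m-1)/(b-m)! = s (a b + s)^(b-1)/b!`, which is the binomial expansion
of `(s + a b)^(b-1)` once `m · C(b, m) = b · C(b-1, m-1)` is used.
-/

open PowerSeries

/-- `expOf f = exp ∘ f` for a power series `f` with zero constant term:
the coefficient of `x^n` is `∑_{m ≤ n} [x^n] (f^m) / m!`. -/
noncomputable def expOf (f : PowerSeries ℚ) : PowerSeries ℚ :=
  PowerSeries.mk fun n =>
    ∑ m ∈ Finset.range (n + 1), (PowerSeries.coeff n (f ^ m)) / Nat.factorial m

open Finset Nat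

theorem PowerSeries.coeff_pow_eq_zero_of_lt {R : Type*} [CommRing R] {f : R⟦X⟧}
    (hf : constantCoeff f = 0) {n m : ℕ} (h : n < m) : coeff n (f ^ m) = 0 :=
  coeff_of_lt_order _ <| (ENat.natCast_lt_natCast.mpr h).trans_le <|
    le_order_pow_of_constantCoeff_eq_zero m hf

theorem PowerSeries.coeff_subst_eq_sum_range {R : Type*} [CommRing R] {f : R⟦X⟧}
    (hf : constantCoeff f = 0) (g : R⟦X⟧) (n : ℕ) :
    coeff n (g.subst f) = ∑ m ∈ range (n + 1), coeff m g * coeff n (f ^ m) := by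
  rw [coeff_subst' (HasSubst.of_constantCoeff_zero' hf)]
  refine finsum_eq_sum_of_support_subset _ fun m hm => ?_
  by_contra hmn
  simp only [coe_range, Set.mem_Iio, not_lt] at hmn
  exact hm (by simp only [coeff_pow_eq_zero_of_lt hf (by omega : n < m), smul_zero])

theorem expOf_eq_subst_exp {f : ℚ⟦X⟧} (hf : constantCoeff f = 0) :
    expOf f = (exp ℚ).subst f := by
  ext n
  simp [expOf, coeff_subst_eq_sum_range hf, coeff_exp, div_eq_inv_mul]

theorem coeff_expOf_pow {f : ℚ⟦X⟧} (hf : constantCoeff f = 0) (r n : ℕ) :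
    coeff n (expOf f ^ r) = ∑ m ∈ range (n + 1), (r : ℚ) ^ m / m ! * coeff n (f ^ m) := by
  rw [expOf_eq_subst_exp hf, ← subst_pow (HasSubst.of_constantCoeff_zero' hf),
    exp_pow_eq_rescale_exp, coeff_subst_eq_sum_range hf]
  simp [coeff_rescale, coeff_exp, div_eq_mul_inv]

/-- The coefficient of `x ^ (a * b + s)` in `z ^ s`; the exponent is an integer so that `b = 0`
gives `s * s⁻¹ = 1`. -/
noncomputable def lagrangeCoeff (a s b : ℕ) : ℚ :=
  s * ((a * b + s : ℕ) : ℚ) ^ ((b : ℤ) - 1) / b !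

theorem pow_div_factorial_mul_lagrangeCoeff {a b j : ℕ} (ha : 0 < a) (hj : j < b) (s : ℕ) :
    (s : ℚ) ^ (j + 1) / (j + 1)! * lagrangeCoeff a (a * (j + 1)) (b - (j + 1)) =
      s / b ! * ((s : ℚ) ^ j * ((a * b : ℕ) : ℚ) ^ (b - 1 - j) * (b - 1).choose j) := by
  have hb : (b : ℚ) ≠ 0 := by exact_mod_cast (show b ≠ 0 by omega)
  have hab : ((a * b : ℕ) : ℚ) ≠ 0 := by
    push_cast
    exact mul_ne_zero (by exact_mod_cast ha.ne') hb
  have hc : ((b - 1).choose j : ℚ) ≠ 0 := by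
    exact_mod_cast (choose_pos (by omega : j ≤ b - 1)).ne'
  have hidx : a * (b - (j + 1)) + a * (j + 1) = a * b := by
    rw [← Nat.mul_add, Nat.sub_add_cancel hj]
  have hexp : ((b - (j + 1) : ℕ) : ℤ) - 1 = ((b - 1 - j : ℕ) : ℤ) - 1 := by omega
  have hchoose : ((b - 1).choose j : ℚ) * j ! * (b - 1 - j)! = (b - 1)! := by
    exact_mod_cast choose_mul_factorial_mul_factorial (by omega : j ≤ b - 1)
  have hfact : (b ! : ℚ) = b * (b - 1)! := by
    exact_mod_cast (mul_factorial_pred (by omega : b ≠ 0)).symm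
  rw [lagrangeCoeff, hidx, hexp, zpow_sub_one₀ hab, zpow_natCast, hfact, ← hchoose,
    factorial_succ, show b - (j + 1) = b - 1 - j by omega]
  push_cast
  field_simp
  ring

theorem sum_pow_div_factorial_mul_lagrangeCoeff {a b : ℕ} (ha : 0 < a) (hb : 0 < b) (s : ℕ) :
    ∑ m ∈ range (b + 1), (s : ℚ) ^ m / m ! * lagrangeCoeff a (a * m) (b - m) =
      lagrangeCoeff a s b := by
  rw [sum_range_succ', mul_zero, lagrangeCoeff, cast_zero, zero_mul, zero_div, mul_zero, add_zero,
    sum_congr rfl fun j hj => pow_div_factorial_mul_lagrangeCoeff ha (mem_range.mp hj) s,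
    ← mul_sum, show range b = range (b - 1 + 1) by rw [Nat.sub_add_cancel hb], ← add_pow,
    lagrangeCoeff, show (b : ℤ) - 1 = ((b - 1 : ℕ) : ℤ) by omega, zpow_natCast]
  push_cast
  ring

section LagrangeInversion

variable {a : ℕ} {z : ℚ⟦X⟧}

theorem constantCoeff_eq_zero_of_eq_X_mul {f : ℚ⟦X⟧} (hz : z = X * f) :
    constantCoeff z = 0 := by
  rw [hz, map_mul, constantCoeff_X, zero_mul]

theorem coeff_pow_of_eq_X_mul_expOf (ha : 0 < a) (hz : z = X * expOf (z ^ a)) {s n : ℕ}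
    (hsn : s ≤ n) :
    coeff n (z ^ s) =
      ∑ m ∈ range (n - s + 1), (s : ℚ) ^ m / m ! * coeff (n - s) (z ^ (a * m)) := by
  have hza : constantCoeff (z ^ a) = 0 := by
    rw [map_pow, constantCoeff_eq_zero_of_eq_X_mul hz, zero_pow ha.ne']
  conv_lhs => rw [hz, mul_pow, mul_comm, ← Nat.sub_add_cancel hsn, coeff_mul_X_pow]
  simp_rw [coeff_expOf_pow hza, pow_mul]

theorem coeff_pow_eq_zero_of_eq_X_mul_expOf (ha : 0 < a) (hz : z = X * expOf (z ^ a)) (n : ℕ)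
    {s : ℕ} (hs : 0 < s) (hn : ¬(s ≤ n ∧ a ∣ n - s)) : coeff n (z ^ s) = 0 := by
  induction n using Nat.strong_induction_on generalizing s with
  | _ n ih =>
  by_cases hsn : s ≤ n
  swap
  · exact coeff_pow_eq_zero_of_lt (constantCoeff_eq_zero_of_eq_X_mul hz) (by omega)
  have hdvd : ¬a ∣ n - s := fun h => hn ⟨hsn, h⟩
  rw [coeff_pow_of_eq_X_mul_expOf ha hz hsn]
  refine sum_eq_zero fun m _ => ?_
  rcases Nat.eq_zero_or_pos m with rfl | hm
  · rw [mul_zero, pow_zero z, coeff_one, if_neg (fun h : n - s = 0 => hdvd (h ▸ dvd_zero a)),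
      mul_zero]
  · rw [ih (n - s) (by omega) (by positivity), mul_zero]
    rintro ⟨hle, c, hc⟩
    exact hdvd ⟨m + c, by rw [Nat.mul_add]; omega⟩

theorem coeff_mul_add_pow_eq_lagrangeCoeff (ha : 0 < a) (hz : z = X * expOf (z ^ a)) (b : ℕ)
    {s : ℕ} (hs : 0 < s) : coeff (a * b + s) (z ^ s) = lagrangeCoeff a s b := by
  induction b using Nat.strong_induction_on generalizing s with
  | _ b ih =>
  rw [coeff_pow_of_eq_X_mul_expOf ha hz (by omega), Nat.add_sub_cancel]
  rcases Nat.eq_zero_or_pos b with rfl | hb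
  · have hs' : (s : ℚ) ≠ 0 := by exact_mod_cast hs.ne'
    simp [lagrangeCoeff, hs']
  rw [← sum_subset (range_subset_range.mpr (show b + 1 ≤ a * b + 1 by nlinarith)),
    ← sum_pow_div_factorial_mul_lagrangeCoeff ha hb s]
  · refine sum_congr rfl fun m hm => ?_
    rcases Nat.eq_zero_or_pos m with rfl | hm0
    · simp [lagrangeCoeff, coeff_one, hb.ne', ha.ne']
    have hmb : m ≤ b := Nat.lt_succ_iff.mp (mem_range.mp hm)
    rw [← ih (b - m) (by omega) (show 0 < a * m by positivity), ← Nat.mul_add,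
      Nat.sub_add_cancel hmb]
  · intro m _ hm
    rw [coeff_pow_eq_zero_of_lt (constantCoeff_eq_zero_of_eq_X_mul hz), mul_zero]
    simp only [mem_range, not_lt] at hm
    nlinarith

end LagrangeInversion

theorem zSeries_pow_eq_general (a r : ℕ) (ha : 0 < a) (hr1 : 1 ≤ r)
    (z : PowerSeries ℚ)
    (hz : z = PowerSeries.X * expOf (z ^ a)) :
    ∀ n : ℕ, PowerSeries.coeff n (z ^ r) =
      if r ≤ n ∧ a ∣ (n - r) then
        (r : ℚ) * (n : ℚ) ^ ((((n - r) / a : ℕ) : ℤ) - 1) / Nat.factorial ((n - r) / a)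
      else 0 := by
  intro n
  split_ifs with hn
  · obtain ⟨hrn, b, hb⟩ := hn
    obtain rfl : n = a * b + r := by omega
    rw [coeff_mul_add_pow_eq_lagrangeCoeff ha hz b hr1, lagrangeCoeff,
      Nat.add_sub_cancel, Nat.mul_div_cancel_left b ha]
  · exact coeff_pow_eq_zero_of_eq_X_mul_expOf ha hz n hr1 hn

/-- If `z` is the formal power series solution of `z = x exp(z^a)` with `z(0) = 0`, then for
`1 ≤ r ≤ a` one has `z^r / r = ∑_{b≥0} ((ab+r)^{b-1}/b!) x^{ab+r}`; equivalently the coefficient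
of `x^n` in `z^r` is `r (ab+r)^{b-1}/b!` when `n = ab+r` and `0` otherwise. -/
theorem zSeries_pow_eq (a r : ℕ) (ha : 0 < a) (hr1 : 1 ≤ r) (hr2 : r ≤ a)
    (z : PowerSeries ℚ) (h0 : PowerSeries.constantCoeff z = 0)
    (hz : z = PowerSeries.X * expOf (z ^ a)) :
    ∀ n : ℕ, PowerSeries.coeff n (z ^ r) =
      if r ≤ n ∧ a ∣ (n - r) then
        (r : ℚ) * (n : ℚ) ^ ((((n - r) / a : ℕ) : ℤ) - 1) / Nat.factorial ((n - r) / a)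
      else 0 :=
  zSeries_pow_eq_general a r ha hr1 z hz
end

section
/- Define \xi_{-1}^{(r)}(z) = z^r/r for 1 \le r \le a-1 and \xi_{-1}^{(a)}(z) = z^a, and \xi_{k+1}^{(r)} = (z/(1 - a z^a)) d/dz \, \xi_k^{(r)}. Then for every k \ge 1, \xi_k^{(r)}(z) = z^r p_k(z^a) / (1 - a z^a)^{2k+1} for some polynomial p_k, of degree k if 1 \le r \le a-1 and degree k-1 if r = a. -/
/-!
Write `D(z) = 1 - a z^a`. The operator `z/D · d/dz` maps `z^r p(z^a) / D^m` to
`z^r q(z^a) / D^(m+2)`, where `q = (1 - aX)(r p + aX p') + m a² X p`. Comparing coefficients of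
`X^(d+1)` with `d = deg p` gives `a (m a - r - a d) lc(p)`, which is nonzero as long as
`r + d a < m a`; so each step raises the degree by one. Starting from
`ξ_0 = c z^r / D` this inequality holds at every step with `m = 2k+1`, except for the first
step when `r = a`: there `ξ_0 = a z^a / D` and `q = a²` is again constant, which is why the
degree lags by one in that case.
-/

/-- The functions `ξ_k^{(r)}` (indexed here with a shift: `xi a r 0 = ξ_{-1}^{(r)}`,
`xi a r (k+1) = ξ_k^{(r)}`), defined by `ξ_{-1}^{(r)}(z) = z^r/r` for `1 ≤ r ≤ a-1`,
`ξ_{-1}^{(a)}(z) = z^a`, and `ξ_{k+1}^{(r)} = (z/(1-az^a)) d/dz ξ_k^{(r)}`. -/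
noncomputable def xi (a r : ℕ) : ℕ → ℝ → ℝ
  | 0 => fun z => if r = a then z ^ a else z ^ r / r
  | k + 1 => fun z => z / (1 - a * z ^ a) * deriv (xi a r k) z

open Polynomial Filter Topology

noncomputable def xiStep (a r m : ℕ) (p : ℝ[X]) : ℝ[X] :=
  (1 - C (a : ℝ) * X) * (C (r : ℝ) * p + C (a : ℝ) * (X * derivative p)) +
    C ((m : ℝ) * a ^ 2) * (X * p)

theorem coeff_X_mul_derivative {R : Type*} [Semiring R] (p : R[X]) (n : ℕ) :
    (X * derivative p).coeff n = p.coeff n * n := by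
  cases n with
  | zero => simp
  | succ n => simp [coeff_X_mul, coeff_derivative]

theorem coeff_xiStep_succ (a r m : ℕ) (p : ℝ[X]) (n : ℕ) :
    (xiStep a r m p).coeff (n + 1) =
      (r + a * (n + 1)) * p.coeff (n + 1) + a * (m * a - r - a * n) * p.coeff n := by
  simp only [xiStep, sub_mul, one_mul, mul_assoc, coeff_add, coeff_sub, coeff_C_mul, coeff_X_mul,
    coeff_X_mul_derivative, coeff_derivative]
  ring

theorem xiStep_self_one_C (a : ℕ) (c : ℝ) : xiStep a a 1 (C c) = C (a * c) := by
  simp only [xiStep, derivative_C, mul_zero, add_zero, Nat.cast_one, one_mul, map_mul, map_pow]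
  ring

section Degree

variable {a r m : ℕ} {p : ℝ[X]}

theorem natDegree_xiStep_le : (xiStep a r m p).natDegree ≤ p.natDegree + 1 := by
  refine natDegree_le_iff_coeff_eq_zero.mpr fun N hN => ?_
  obtain ⟨n, rfl⟩ : ∃ n, N = n + 1 := ⟨N - 1, by omega⟩
  rw [coeff_xiStep_succ, coeff_eq_zero_of_natDegree_lt (by omega),
    coeff_eq_zero_of_natDegree_lt (by omega)]
  ring

theorem coeff_xiStep_natDegree_succ :
    (xiStep a r m p).coeff (p.natDegree + 1) =
      a * (m * a - r - a * p.natDegree) * p.leadingCoeff := by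
  rw [coeff_xiStep_succ, coeff_eq_zero_of_natDegree_lt (Nat.lt_succ_self _), leadingCoeff]
  ring

theorem natDegree_xiStep (ha : a ≠ 0) (hp : p ≠ 0) (hlt : r + p.natDegree * a < m * a) :
    (xiStep a r m p).natDegree = p.natDegree + 1 := by
  have hgap : (m * a - r - a * p.natDegree : ℝ) ≠ 0 := by
    have : (r + p.natDegree * a : ℝ) < m * a := by exact_mod_cast hlt
    linarith
  refine natDegree_eq_of_le_of_coeff_ne_zero natDegree_xiStep_le ?_
  rw [coeff_xiStep_natDegree_succ]
  exact mul_ne_zero (mul_ne_zero (Nat.cast_ne_zero.mpr ha) hgap) (leadingCoeff_ne_zero.mpr hp)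

end Degree

theorem mul_deriv_eq_eval_xiStep (a r m : ℕ) (p : ℝ[X]) {z : ℝ} (hz : 1 - a * z ^ a ≠ 0) :
    z / (1 - a * z ^ a) * deriv (fun w => w ^ r * p.eval (w ^ a) / (1 - a * w ^ a) ^ m) z =
      z ^ r * (xiStep a r m p).eval (z ^ a) / (1 - a * z ^ a) ^ (m + 2) := by
  have hpow : ∀ (x : ℝ) (n : ℕ), (n : ℝ) * x ^ (n - 1) * x = n * x ^ n := by
    rintro x (_ | n)
    · simp
    · simp [pow_succ, mul_assoc]
  have hp : HasDerivAt (fun w : ℝ => p.eval (w ^ a))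
      (p.derivative.eval (z ^ a) * (a * z ^ (a - 1))) z :=
    (p.hasDerivAt (z ^ a)).comp z (hasDerivAt_pow a z)
  have hD : HasDerivAt (fun w : ℝ => (1 - a * w ^ a) ^ m)
      (m * (1 - a * z ^ a) ^ (m - 1) * -(a * (a * z ^ (a - 1)))) z :=
    (((hasDerivAt_pow a z).const_mul (a : ℝ)).const_sub 1).pow m
  have hf : HasDerivAt (fun w : ℝ => w ^ r * p.eval (w ^ a) / (1 - a * w ^ a) ^ m) _ z :=
    ((hasDerivAt_pow r z).mul hp).div hD (pow_ne_zero m hz)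
  rw [hf.deriv]
  simp only [xiStep, eval_add, eval_mul, eval_sub, eval_one, eval_C, eval_X, Pi.mul_apply]
  set D := 1 - (a : ℝ) * z ^ a
  field_simp
  linear_combination (p.eval (z ^ a) * D ^ m * D ^ (m + 2)) * hpow z r
    + (z ^ r * (derivative p).eval (z ^ a) * D ^ m * D ^ (m + 2)) * hpow z a
    + (a * z ^ r * p.eval (z ^ a) * m * D ^ (m - 1) * D ^ (m + 2)) * hpow z a
    + (a ^ 2 * z ^ a * z ^ r * p.eval (z ^ a) * D ^ (m + 1)) * hpow D m

theorem xi_zero (a r : ℕ) : xi a r 0 = fun z => (if r = a then 1 else (r : ℝ)⁻¹) * z ^ r := by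
  funext z
  split_ifs with hra
  · simp [xi, hra]
  · simp [xi, hra, div_eq_inv_mul]

theorem xi_one {a r : ℕ} (hr : r ≠ 0) (z : ℝ) :
    xi a r 1 z = (if r = a then (a : ℝ) else 1) * z ^ r / (1 - a * z ^ a) := by
  show z / (1 - a * z ^ a) * deriv (xi a r 0) z = _
  rw [xi_zero, ((hasDerivAt_pow r z).const_mul _).deriv, ← pow_sub_one_mul hr z]
  have hr' : (r : ℝ) ≠ 0 := Nat.cast_ne_zero.mpr hr
  split_ifs with hra
  · subst hra; ring
  · field_simp

theorem xi_succ_eq_of_eq {a r k m : ℕ} {p : ℝ[X]}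
    (h : ∀ z : ℝ, 1 - a * z ^ a ≠ 0 → xi a r k z = z ^ r * p.eval (z ^ a) / (1 - a * z ^ a) ^ m)
    {z : ℝ} (hz : 1 - a * z ^ a ≠ 0) :
    xi a r (k + 1) z = z ^ r * (xiStep a r m p).eval (z ^ a) / (1 - a * z ^ a) ^ (m + 2) := by
  have hopen : IsOpen {w : ℝ | 1 - a * w ^ a ≠ 0} := isOpen_ne_fun (by fun_prop) continuous_const
  have hev : xi a r k =ᶠ[𝓝 z] fun w => w ^ r * p.eval (w ^ a) / (1 - a * w ^ a) ^ m :=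
    eventually_of_mem (hopen.mem_nhds hz) h
  show z / (1 - a * z ^ a) * deriv (xi a r k) z = _
  rw [hev.deriv_eq]
  exact mul_deriv_eq_eval_xiStep a r m p hz

theorem exists_xi_eq {a r : ℕ} (hr1 : 1 ≤ r) (hr2 : r ≤ a) (k : ℕ) :
    ∃ p : ℝ[X], p.natDegree = (if r = a then k - 1 else k) ∧ p ≠ 0 ∧
      ∀ z : ℝ, 1 - a * z ^ a ≠ 0 →
        xi a r (k + 1) z = z ^ r * p.eval (z ^ a) / (1 - a * z ^ a) ^ (2 * k + 1) := by
  have ha : a ≠ 0 := by omega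
  induction k with
  | zero =>
    refine ⟨C (if r = a then (a : ℝ) else 1), by simp, ?_, fun z _ => ?_⟩
    · split_ifs <;> simp [ha]
    · rw [xi_one (by omega), eval_C, mul_comm, pow_one, mul_div_assoc]
  | succ k ih =>
    obtain ⟨p, hdeg, hp, hxi⟩ := ih
    by_cases hfirst : r = a ∧ k = 0
    · obtain ⟨rfl, rfl⟩ := hfirst
      obtain ⟨c, rfl⟩ : ∃ c, p = C c := ⟨_, eq_C_of_natDegree_eq_zero (by simpa using hdeg)⟩
      refine ⟨C (r * c), by rw [natDegree_C]; simp, by simpa [ha] using hp, fun z hz => ?_⟩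
      rw [← xiStep_self_one_C]
      exact xi_succ_eq_of_eq hxi hz
    have hlt : r + p.natDegree * a < (2 * k + 1) * a := by
      have : r + p.natDegree * a < (k + 1) * a := by
        rw [hdeg]
        split_ifs with hra
        · obtain ⟨j, rfl⟩ : ∃ j, k = j + 1 := ⟨k - 1, by omega⟩
          subst hra; simp only [Nat.add_sub_cancel]; nlinarith
        · nlinarith [lt_of_le_of_ne hr2 hra]
      nlinarith
    have hnat := natDegree_xiStep ha hp hlt
    refine ⟨xiStep a r (2 * k + 1) p, ?_, ne_zero_of_natDegree_gt (n := 0) (by omega),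
      fun z hz => xi_succ_eq_of_eq hxi hz⟩
    rw [hnat, hdeg]
    split_ifs <;> omega

theorem xi_eq_poly_general (a r : ℕ) (hr1 : 1 ≤ r) (hr2 : r ≤ a) :
    ∀ k : ℕ, 1 ≤ k → ∃ p : Polynomial ℝ,
      p.natDegree = (if r = a then k - 1 else k) ∧ p ≠ 0 ∧
      ∀ z : ℝ, 1 - a * z ^ a ≠ 0 →
        xi a r (k + 1) z = z ^ r * p.eval (z ^ a) / (1 - a * z ^ a) ^ (2 * k + 1) :=
  fun k _ => exists_xi_eq hr1 hr2 k

/-- For every `k ≥ 1`, `ξ_k^{(r)}(z) = z^r p_k(z^a)/(1-az^a)^{2k+1}` for some polynomial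
`p_k` of degree `k` if `1 ≤ r ≤ a-1` and degree `k-1` if `r = a`. -/
theorem xi_eq_poly (a r : ℕ) (ha : 0 < a) (hr1 : 1 ≤ r) (hr2 : r ≤ a) :
    ∀ k : ℕ, 1 ≤ k → ∃ p : Polynomial ℝ,
      p.natDegree = (if r = a then k - 1 else k) ∧ p ≠ 0 ∧
      ∀ z : ℝ, 1 - a * z ^ a ≠ 0 →
        xi a r (k + 1) z = z ^ r * p.eval (z ^ a) / (1 - a * z ^ a) ^ (2 * k + 1) :=
  xi_eq_poly_general a r hr1 hr2
end

section
/- The unique sequence of symmetric polynomials Q_n(\mu_1,\ldots,\mu_n) of degree at most n-3 for n \ge 3 satisfying the string equation Q_{n+1}(\mu_1,\ldots,\mu_n,0) = (\mu_1 + \cdots + \mu_n) Q_n(\mu_1,\ldots,\mu_n) with initial data Q_3 = 1/a is Q_n = (1/a)(\mu_1 + \cdots + \mu_n)^{n-3}. -/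
open MvPolynomial

-- coeff 0 of finSuccEquiv equals the substitution sending X 0 ↦ 0, X j.succ ↦ X j
lemma coeff_zero_finSuccEquiv {n : ℕ} (p : MvPolynomial (Fin (n + 1)) ℚ) :
    Polynomial.coeff (finSuccEquiv ℚ n p) 0 =
      aeval (fun i : Fin (n + 1) =>
        Fin.cases (0 : MvPolynomial (Fin n) ℚ) (fun j => X j) i) p := by
  induction p using MvPolynomial.induction_on with
  | C a => simp [finSuccEquiv_apply]
  | add p q hp hq => simp [map_add, Polynomial.coeff_add, hp, hq]
  | mul_X p i hp =>
    induction i using Fin.cases with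
    | zero =>
      rw [map_mul, finSuccEquiv_X_zero, Polynomial.coeff_mul_X_zero]
      simp
    | succ j =>
      rw [map_mul, finSuccEquiv_X_succ, Polynomial.coeff_mul_C, hp]
      simp


/-- String-equation uniqueness: given `Qₙ = c (μ₁+⋯+μₙ)^{n-3}` (with `c = 1/a ≠ 0`), any
symmetric polynomial `Q = Q_{n+1}` in `n+1` variables of total degree at most `n-2`
satisfying `Q(μ₁,…,μₙ,0) = (μ₁+⋯+μₙ) Qₙ(μ₁,…,μₙ)` equals `c (μ₁+⋯+μ_{n+1})^{n-2}`. -/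
theorem string_equation_unique (c : ℚ) (hc : c ≠ 0) (n : ℕ) (hn : 3 ≤ n)
    (Q : MvPolynomial (Fin (n + 1)) ℚ) (hsym : Q.IsSymmetric)
    (hdeg : Q.totalDegree ≤ n - 2)
    (hstring :
      MvPolynomial.aeval
          (fun i : Fin (n + 1) =>
            Fin.lastCases (0 : MvPolynomial (Fin n) ℚ) (fun j => MvPolynomial.X j) i) Q =
        (∑ i : Fin n, MvPolynomial.X i) *
          (MvPolynomial.C c * (∑ i : Fin n, MvPolynomial.X i) ^ (n - 3))) :
    Q = MvPolynomial.C c * (∑ i : Fin (n + 1), MvPolynomial.X i) ^ (n - 2) := by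
  set S : MvPolynomial (Fin (n + 1)) ℚ := ∑ i : Fin (n + 1), X i with hS
  set P : MvPolynomial (Fin (n + 1)) ℚ := Q - C c * S ^ (n - 2) with hP
  set f : Fin (n + 1) → MvPolynomial (Fin n) ℚ :=
    fun i => Fin.lastCases (0 : MvPolynomial (Fin n) ℚ) (fun j => X j) i with hf
  set g : Fin (n + 1) → MvPolynomial (Fin n) ℚ :=
    fun i => Fin.cases (0 : MvPolynomial (Fin n) ℚ) (fun j => X j) i with hg
  -- the target polynomial is symmetric
  have hsymT : (C c * S ^ (n - 2) : MvPolynomial (Fin (n + 1)) ℚ).IsSymmetric := by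
    intro σ
    rw [map_mul, map_pow, rename_C, hS, map_sum]
    congr 2
    simp only [rename_X]
    exact Equiv.sum_comp σ (fun i => X i)
  have hsymP : P.IsSymmetric := fun σ => by
    rw [hP, map_sub, hsym σ, hsymT σ]
  -- substitution of f on S
  have hfS : aeval f S = ∑ i : Fin n, X i := by
    rw [hS, map_sum]
    rw [Fin.sum_univ_castSucc]
    simp [hf]
  -- the string equation implies aeval f P = 0
  have hfP : aeval f P = 0 := by
    rw [hP, map_sub, hstring, map_mul, map_pow, aeval_C, hfS]
    have h32 : n - 2 = (n - 3) + 1 := by omega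
    rw [h32, pow_succ, algebraMap_eq]
    ring
  -- degree bound on P
  have hdegP : P.totalDegree ≤ n - 2 := by
    rw [hP, sub_eq_add_neg]
    refine (totalDegree_add _ _).trans (max_le hdeg ?_)
    rw [totalDegree_neg]
    refine (totalDegree_mul _ _).trans ?_
    rw [totalDegree_C, zero_add]
    refine (totalDegree_pow _ _).trans ?_
    have hSdeg : S.totalDegree ≤ 1 := by
      rw [hS]
      exact totalDegree_finsetSum_le fun i _ => le_of_eq (totalDegree_X i)
    calc (n - 2) * S.totalDegree ≤ (n - 2) * 1 := Nat.mul_le_mul_left _ hSdeg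
      _ = n - 2 := by omega
  -- via rotation: setting the first variable to zero also kills P
  have hrot : aeval g P = 0 := by
    have hcomp : f ∘ (finRotate (n + 1)).symm = g := by
      funext i
      induction i using Fin.cases with
      | zero =>
        have h0 : (finRotate (n + 1)).symm 0 = Fin.last n := by
          rw [Equiv.symm_apply_eq, finRotate_last]
        simp [Function.comp, h0, hf, hg]
      | succ j =>
        have hsj : (finRotate (n + 1)).symm j.succ = j.castSucc := by
          rw [Equiv.symm_apply_eq, finRotate_succ_apply]
          simp [Fin.coeSucc_eq_succ]
        simp [Function.comp, hsj, hf, hg]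
    calc aeval g P = aeval (f ∘ (finRotate (n + 1)).symm) P := by rw [hcomp]
      _ = aeval f (rename (finRotate (n + 1)).symm P) := (aeval_rename _ _ _).symm
      _ = aeval f P := by rw [hsymP]
      _ = 0 := hfP
  -- coefficients with first exponent zero vanish
  have hcoeff0 : ∀ m : Fin n →₀ ℕ, coeff (Finsupp.cons 0 m) P = 0 := by
    intro m
    rw [← finSuccEquiv_coeff_coeff, coeff_zero_finSuccEquiv, ← hg, hrot, coeff_zero]
  -- conclude P = 0
  have hP0 : P = 0 := by
    ext d
    rw [coeff_zero]
    by_contra hd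
    -- some variable has exponent zero
    have hdsum : ∑ i : Fin (n + 1), d i ≤ n - 2 := by
      have h1 : (d.sum fun _ e => e) ≤ P.totalDegree :=
        le_totalDegree (mem_support_iff.mpr hd)
      have h2 : (d.sum fun _ e => e) = ∑ i : Fin (n + 1), d i :=
        Finsupp.sum_fintype _ _ fun _ => rfl
      omega
    have hex : ∃ i, d i = 0 := by
      by_contra hno
      push_neg at hno
      have : ∑ _i : Fin (n + 1), 1 ≤ ∑ i : Fin (n + 1), d i :=
        Finset.sum_le_sum fun i _ => Nat.one_le_iff_ne_zero.mpr (hno i)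
      simp at this
      omega
    obtain ⟨i, hi⟩ := hex
    set σ := Equiv.swap i (0 : Fin (n + 1)) with hσ
    set d' := d.mapDomain σ with hd'
    have hcoeff : coeff d' P = coeff d P := by
      conv_lhs => rw [← hsymP σ]
      exact coeff_rename_mapDomain σ σ.injective P d
    have hd'0 : d' 0 = 0 := by
      rw [hd', Finsupp.mapDomain_equiv_apply]
      simp [hσ, hi]
    have : coeff d' P = 0 := by
      rw [← Finsupp.cons_tail d', hd'0]
      exact hcoeff0 _
    rw [hcoeff] at this
    exact hd this
  exact sub_eq_zero.mp hP0
end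

section
/- If H(x_1, x_2) is the symmetric formal series with x_1 \partial_{x_1} H = x_2/(x_2 - x_1) - z_2/((z_2 - z_1)(1 - a z_1^a)) (where x_i = z_i e^{-z_i^a}), then x_1 x_2 \partial_{x_1}\partial_{x_2} H = -x_1 x_2/(x_1 - x_2)^2 + (x_1 x_2/(z_1 - z_2)^2) (dz_1/dx_1)(dz_2/dx_2); equivalently the bidifferential d_1 d_2 H equals dz_1 dz_2/(z_1 - z_2)^2 - dx_1 dx_2/(x_1 - x_2)^2. -/
/-!
Since `x'(z) = e^{-z^a} (1 - a z^a)`, the prefactor `z₂ / (1 - a z₂^a)` is `x₂ / x'(z₂)`.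
Both terms of `x₁∂_{x₁}H` have the shape `f / (f - c)`, with derivative `-c f' / (f - c)²`:
for `f = x(w)` this yields `-x₁x₂ / (x₁ - x₂)²`, and for `f = w` (after dividing by
`1 - a z₁^a`) it yields the `dz₁ dz₂ / (z₁ - z₂)²` term once `z_i = x_i e^{z_i^a}` is substituted.
-/

open Complex

theorem hasDerivAt_mul_cexp_neg_pow (a : ℕ) (z : ℂ) :
    HasDerivAt (fun w : ℂ => w * cexp (-w ^ a)) (cexp (-z ^ a) * (1 - a * z ^ a)) z := by
  have h := (hasDerivAt_id' z).fun_mul ((hasDerivAt_pow a z).fun_neg.cexp)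
  have hpow : (a : ℂ) * z ^ (a - 1) * z = a * z ^ a := by
    rcases Nat.eq_zero_or_pos a with rfl | ha
    · simp
    · rw [mul_assoc, ← pow_succ, Nat.sub_add_cancel ha]
  refine h.congr_deriv ?_
  linear_combination -cexp (-z ^ a) * hpow

theorem HasDerivAt.div_sub_const_self {𝕜 : Type*} [NontriviallyNormedField 𝕜] {f : 𝕜 → 𝕜}
    {f' c z : 𝕜} (hf : HasDerivAt f f' z) (hc : f z ≠ c) :
    HasDerivAt (fun w => f w / (f w - c)) (-(c * f') / (f z - c) ^ 2) z := by
  refine (hf.fun_div (hf.sub_const c) (sub_ne_zero.mpr hc)).congr_deriv ?_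
  ring

theorem unstable_02_identity_general (a : ℕ) (z₁ z₂ : ℂ)
    (h2 : 1 - (a : ℂ) * z₂ ^ a ≠ 0)
    (hx : z₁ * Complex.exp (-z₁ ^ a) ≠ z₂ * Complex.exp (-z₂ ^ a)) :
    z₂ / (1 - (a : ℂ) * z₂ ^ a) *
        deriv (fun w : ℂ =>
          (w * Complex.exp (-w ^ a)) /
              (w * Complex.exp (-w ^ a) - z₁ * Complex.exp (-z₁ ^ a)) -
            w / ((w - z₁) * (1 - (a : ℂ) * z₁ ^ a))) z₂ =
      -((z₁ * Complex.exp (-z₁ ^ a)) * (z₂ * Complex.exp (-z₂ ^ a))) /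
          (z₁ * Complex.exp (-z₁ ^ a) - z₂ * Complex.exp (-z₂ ^ a)) ^ 2 +
        (z₁ * Complex.exp (-z₁ ^ a)) * (z₂ * Complex.exp (-z₂ ^ a)) /
          ((z₁ - z₂) ^ 2 * deriv (fun w : ℂ => w * Complex.exp (-w ^ a)) z₁ *
            deriv (fun w : ℂ => w * Complex.exp (-w ^ a)) z₂) := by
  have hz : z₂ ≠ z₁ := fun h => hx (h ▸ rfl)
  have hX₁ := hasDerivAt_mul_cexp_neg_pow a z₁
  have hX₂ := hasDerivAt_mul_cexp_neg_pow a z₂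
  have hfirst := hX₂.div_sub_const_self (Ne.symm hx)
  have hsecond := ((hasDerivAt_id' z₂).div_sub_const_self hz).div_const (1 - (a : ℂ) * z₁ ^ a)
  simp only [div_div] at hsecond
  rw [(hfirst.fun_sub hsecond).deriv, hX₁.deriv, hX₂.deriv]
  have he₁ := Complex.exp_ne_zero (-z₁ ^ a)
  have he₂ := Complex.exp_ne_zero (-z₂ ^ a)
  field_simp
  ring

/-- With `x(z) = z e^{-z^a}` and `x₁∂_{x₁}H = x₂/(x₂-x₁) - z₂/((z₂-z₁)(1-az₁^a))`,
applying `x₂∂_{x₂} = (z₂/(1-az₂^a)) ∂_{z₂}` yields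
`x₁x₂ ∂_{x₁}∂_{x₂} H = -x₁x₂/(x₁-x₂)² + (x₁x₂/(z₁-z₂)²)(dz₁/dx₁)(dz₂/dx₂)`,
where `dz/dx = 1/x'(z)`. -/
theorem unstable_02_identity (a : ℕ) (ha : 0 < a) (z₁ z₂ : ℂ)
    (h1 : 1 - (a : ℂ) * z₁ ^ a ≠ 0) (h2 : 1 - (a : ℂ) * z₂ ^ a ≠ 0)
    (hne : z₁ ≠ z₂)
    (hx : z₁ * Complex.exp (-z₁ ^ a) ≠ z₂ * Complex.exp (-z₂ ^ a)) :
    z₂ / (1 - (a : ℂ) * z₂ ^ a) *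
        deriv (fun w : ℂ =>
          (w * Complex.exp (-w ^ a)) /
              (w * Complex.exp (-w ^ a) - z₁ * Complex.exp (-z₁ ^ a)) -
            w / ((w - z₁) * (1 - (a : ℂ) * z₁ ^ a))) z₂ =
      -((z₁ * Complex.exp (-z₁ ^ a)) * (z₂ * Complex.exp (-z₂ ^ a))) /
          (z₁ * Complex.exp (-z₁ ^ a) - z₂ * Complex.exp (-z₂ ^ a)) ^ 2 +
        (z₁ * Complex.exp (-z₁ ^ a)) * (z₂ * Complex.exp (-z₂ ^ a)) /
          ((z₁ - z₂) ^ 2 * deriv (fun w : ℂ => w * Complex.exp (-w ^ a)) z₁ *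
            deriv (fun w : ℂ => w * Complex.exp (-w ^ a)) z₂) :=
  unstable_02_identity_general a z₁ z₂ h2 hx
end
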